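/- arXiv:1908.07703 — 2 statements merged into one kernel-verified Lean document; each statement's English description precedes it below -/
import Mathlib

section
/- Let 0 < q < 1 < p and μ > 0, and let φ, ψ ∈ C(Ω̄)∩C²(Ω) satisfy 0 ≤ φ ≤ ψ on Ω, −Δφ ≤ μ φ^q in Ω, and −Δψ ≥ μ ψ^q + ψ^p in Ω. Then for every β ∈ (0, 1] and every continuous function ω with β·φ ≤ ω ≤ ψ on Ω, one has −β^q·Δφ(x) ≤ μ·ω(x)^q + ω(x)^p ≤ −Δψ(x) for all x ∈ Ω; that is, condition (G2) holds with exponent α = q for the nonlinearity g(x,u) = μ u^q + u^p. -/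
open MeasureTheory Set Real
open scoped ENNReal NNReal

noncomputable section

/-- The Laplacian of `u : ℝ^N → ℝ`, as the sum of second partial derivatives. -/
def lapl {N : ℕ} (u : EuclideanSpace ℝ (Fin N) → ℝ) (x : EuclideanSpace ℝ (Fin N)) : ℝ :=
  ∑ i : Fin N, fderiv ℝ (fun y => fderiv ℝ u y (EuclideanSpace.single i 1)) x
    (EuclideanSpace.single i 1)

/-- The `L^p` norm of `u` on `Ω`. -/
def LpNorm {N : ℕ} (Ω : Set (EuclideanSpace ℝ (Fin N))) (p : ℝ≥0∞)
    (u : EuclideanSpace ℝ (Fin N) → ℝ) : ℝ :=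
  (eLpNorm u p (volume.restrict Ω)).toReal

/-- The `L²` norm of the gradient of `u` on `Ω`. -/
def gradNorm2 {N : ℕ} (Ω : Set (EuclideanSpace ℝ (Fin N)))
    (u : EuclideanSpace ℝ (Fin N) → ℝ) : ℝ :=
  (eLpNorm (fun x => gradient u x) 2 (volume.restrict Ω)).toReal

/-! The upper bound is monotonicity of `g(u) = μ u^q + u^p` on `[0, ∞)`. For the lower bound,
`-β^q Δφ ≤ β^q μ φ^q = μ (βφ)^q ≤ μ ω^q ≤ g(ω)`: the exponent `α = q` is exactly what lets the
factor `β^q` be absorbed into the concave term. -/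

def concaveConvex (μ q p u : ℝ) : ℝ := μ * u ^ q + u ^ p

section ConcaveConvex

variable {μ q p : ℝ}

theorem concaveConvex_le_concaveConvex (hμ : 0 ≤ μ) (hq : 0 ≤ q) (hp : 0 ≤ p) {u v : ℝ}
    (hu : 0 ≤ u) (huv : u ≤ v) : concaveConvex μ q p u ≤ concaveConvex μ q p v := by
  unfold concaveConvex
  gcongr

theorem rpow_mul_concave_le_concaveConvex (hμ : 0 ≤ μ) (hq : 0 ≤ q) {β u v : ℝ}
    (hβ : 0 ≤ β) (hu : 0 ≤ u) (h : β * u ≤ v) :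
    β ^ q * (μ * u ^ q) ≤ concaveConvex μ q p v := by
  have hv : 0 ≤ v := (mul_nonneg hβ hu).trans h
  calc β ^ q * (μ * u ^ q) = μ * (β * u) ^ q := by rw [mul_rpow hβ hu]; ring
    _ ≤ μ * v ^ q := by gcongr
    _ ≤ concaveConvex μ q p v := le_add_of_nonneg_right (rpow_nonneg hv p)

end ConcaveConvex

theorem stmt_8_general {N : ℕ} (Ω : Set (EuclideanSpace ℝ (Fin N)))
    (q p μ : ℝ) (hq0 : 0 < q) (hp : 1 < p) (hμ : 0 < μ)
    (φ ψ : EuclideanSpace ℝ (Fin N) → ℝ)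
    (hφψ : ∀ x ∈ Ω, 0 ≤ φ x ∧ φ x ≤ ψ x)
    (hsub : ∀ x ∈ Ω, -lapl φ x ≤ μ * φ x ^ q)
    (hsup : ∀ x ∈ Ω, -lapl ψ x ≥ μ * ψ x ^ q + ψ x ^ p) :
    ∀ β : ℝ, 0 < β → β ≤ 1 →
      ∀ ω : EuclideanSpace ℝ (Fin N) → ℝ, ContinuousOn ω (closure Ω) →
        (∀ x ∈ Ω, β * φ x ≤ ω x ∧ ω x ≤ ψ x) →
        ∀ x ∈ Ω, (-(β ^ q)) * lapl φ x ≤ μ * ω x ^ q + ω x ^ p ∧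
          μ * ω x ^ q + ω x ^ p ≤ -lapl ψ x := by
  intro β hβ _ ω _ hω x hx
  obtain ⟨hφ, -⟩ := hφψ x hx
  obtain ⟨hβφω, hωψ⟩ := hω x hx
  constructor
  · calc -(β ^ q) * lapl φ x = β ^ q * -lapl φ x := by ring
      _ ≤ β ^ q * (μ * φ x ^ q) := by gcongr; exact hsub x hx
      _ ≤ concaveConvex μ q p (ω x) :=
        rpow_mul_concave_le_concaveConvex hμ.le hq0.le hβ.le hφ hβφω
  · calc concaveConvex μ q p (ω x) ≤ concaveConvex μ q p (ψ x) :=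
          concaveConvex_le_concaveConvex hμ.le hq0.le (by linarith)
            ((mul_nonneg hβ.le hφ).trans hβφω) hωψ
      _ ≤ -lapl ψ x := hsup x hx

/-- Condition (G2) holds with exponent `α = q` for the concave-convex nonlinearity
`g(x, u) = μ u^q + u^p`, given the sub/supersolution inequalities for `φ` and `ψ`. -/
theorem stmt_8 {N : ℕ} (hN : 1 ≤ N) (Ω : Set (EuclideanSpace ℝ (Fin N)))
    (hΩo : IsOpen Ω) (hΩconn : IsConnected Ω) (hΩbd : Bornology.IsBounded Ω)
    (q p μ : ℝ) (hq0 : 0 < q) (hq1 : q < 1) (hp : 1 < p) (hμ : 0 < μ)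
    (φ ψ : EuclideanSpace ℝ (Fin N) → ℝ)
    (hφc : ContinuousOn φ (closure Ω)) (hφ2 : ContDiffOn ℝ 2 φ Ω)
    (hψc : ContinuousOn ψ (closure Ω)) (hψ2 : ContDiffOn ℝ 2 ψ Ω)
    (hφψ : ∀ x ∈ Ω, 0 ≤ φ x ∧ φ x ≤ ψ x)
    (hsub : ∀ x ∈ Ω, -lapl φ x ≤ μ * φ x ^ q)
    (hsup : ∀ x ∈ Ω, -lapl ψ x ≥ μ * ψ x ^ q + ψ x ^ p) :
    ∀ β : ℝ, 0 < β → β ≤ 1 →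
      ∀ ω : EuclideanSpace ℝ (Fin N) → ℝ, ContinuousOn ω (closure Ω) →
        (∀ x ∈ Ω, β * φ x ≤ ω x ∧ ω x ≤ ψ x) →
        ∀ x ∈ Ω, (-(β ^ q)) * lapl φ x ≤ μ * ω x ^ q + ω x ^ p ∧
          μ * ω x ^ q + ω x ^ p ≤ -lapl ψ x :=
  stmt_8_general Ω q p μ hq0 hp hμ φ ψ hφψ hsub hsup
end
end

section
/- Let ξ be a torsion function of Ω with sup_Ω ξ > 0, let 0 < q < 1, and let M₁ > 0 satisfy M₁ > π·M₁³·(sup_Ω ξ)³ and M₁·sup_Ω ξ ≤ π/2. Set μ₀ := (M₁ − π·M₁³·(sup_Ω ξ)³) / (M₁^q·(sup_Ω ξ)^q). Then μ₀ > 0 and for every μ ∈ (0, μ₀) the function ψ := M₁·ξ satisfies 0 ≤ ψ ≤ π/2 on Ω and −Δψ(x) = M₁ > μ·ψ(x)^q + π·sin³(ψ(x)) for all x ∈ Ω; that is, ψ is a supersolution of −Δu = μ u^q + π sin³(u) with zero Dirichlet boundary data. -/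
open MeasureTheory Set Real
open scoped ENNReal NNReal

noncomputable section

/-- A torsion function of `Ω`: `ξ ∈ C(Ω̄) ∩ C²(Ω)`, `ξ ≥ 0` in `Ω`, `-Δξ = 1` in `Ω`,
`ξ = 0` on `∂Ω`. -/
def IsTorsionFn {N : ℕ} (Ω : Set (EuclideanSpace ℝ (Fin N)))
    (ξ : EuclideanSpace ℝ (Fin N) → ℝ) : Prop :=
  ContinuousOn ξ (closure Ω) ∧ ContDiffOn ℝ 2 ξ Ω ∧ (∀ x ∈ Ω, 0 ≤ ξ x) ∧
    (∀ x ∈ Ω, -lapl ξ x = 1) ∧ (∀ x ∈ frontier Ω, ξ x = 0)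

/-!
Since `-Δξ = 1`, the function `ψ = M₁ ξ` has `-Δψ = M₁`. On `Ω` we have
`0 ≤ ψ ≤ M₁ sup ξ ≤ π/2`, so `sin ψ ≤ ψ` and the monotonicity of `t ↦ t^q` bound
`μ ψ^q + π sin³ ψ` by `μ (M₁ sup ξ)^q + π (M₁ sup ξ)^3`, which is `< M₁` exactly when `μ < μ₀`.
-/

/-- No differentiability is needed: over a field, `fderiv (c • u) = c • fderiv u` for every `c`. -/
theorem lapl_const_mul {N : ℕ} (c : ℝ) (u : EuclideanSpace ℝ (Fin N) → ℝ)
    (x : EuclideanSpace ℝ (Fin N)) : lapl (fun y => c * u y) x = c * lapl u x := by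
  have hu : fderiv ℝ (fun y => c * u y) = c • fderiv ℝ u := fderiv_const_smul_field (f := u) c
  have hdu (v : EuclideanSpace ℝ (Fin N)) :
      (fun y => (c • fderiv ℝ u) y v) = c • fun y => fderiv ℝ u y v := rfl
  simp only [lapl, hu, hdu, fderiv_const_smul_field, Finset.mul_sum]
  rfl

theorem IsTorsionFn.bddAbove_image {N : ℕ} {Ω : Set (EuclideanSpace ℝ (Fin N))}
    {ξ : EuclideanSpace ℝ (Fin N) → ℝ} (hξ : IsTorsionFn Ω ξ) (hΩ : Bornology.IsBounded Ω) :
    BddAbove (ξ '' Ω) :=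
  ((hΩ.isCompact_closure.image_of_continuousOn hξ.1).bddAbove).mono
    (image_mono subset_closure)

theorem sin_pow_three_le_pow_three {t m : ℝ} (ht : 0 ≤ t) (htm : t ≤ m) (htπ : t ≤ π) :
    sin t ^ 3 ≤ m ^ 3 :=
  pow_le_pow_left₀ (sin_nonneg_of_nonneg_of_le_pi ht htπ) ((sin_le ht).trans htm) 3

theorem mul_rpow_add_pi_mul_sin_pow_three_lt {t m q μ M : ℝ} (ht : 0 ≤ t) (htm : t ≤ m)
    (htπ : t ≤ π) (hq : 0 ≤ q) (hμ : 0 ≤ μ) (hM : μ * m ^ q < M - π * m ^ 3) :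
    μ * t ^ q + π * sin t ^ 3 < M := by
  have hrpow : μ * t ^ q ≤ μ * m ^ q := by gcongr
  have hsin : π * sin t ^ 3 ≤ π * m ^ 3 :=
    mul_le_mul_of_nonneg_left (sin_pow_three_le_pow_three ht htm htπ) pi_pos.le
  linarith

theorem stmt_12_general {N : ℕ} (Ω : Set (EuclideanSpace ℝ (Fin N)))
    (hΩbd : Bornology.IsBounded Ω)
    (ξ : EuclideanSpace ℝ (Fin N) → ℝ) (hξ : IsTorsionFn Ω ξ)
    (hξpos : 0 < sSup (ξ '' Ω))
    (q : ℝ) (hq0 : 0 < q)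
    (M₁ : ℝ) (hM₁ : 0 < M₁)
    (hsmall : M₁ > π * M₁ ^ 3 * (sSup (ξ '' Ω)) ^ 3)
    (hhalf : M₁ * sSup (ξ '' Ω) ≤ π / 2) :
    0 < (M₁ - π * M₁ ^ 3 * (sSup (ξ '' Ω)) ^ 3) / (M₁ ^ q * (sSup (ξ '' Ω)) ^ q) ∧
    ∀ μ : ℝ, 0 < μ →
      μ < (M₁ - π * M₁ ^ 3 * (sSup (ξ '' Ω)) ^ 3) / (M₁ ^ q * (sSup (ξ '' Ω)) ^ q) →
      (∀ x ∈ Ω, 0 ≤ M₁ * ξ x ∧ M₁ * ξ x ≤ π / 2) ∧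
      ∀ x ∈ Ω, -lapl (fun y => M₁ * ξ y) x = M₁ ∧
        M₁ > μ * (M₁ * ξ x) ^ q + π * Real.sin (M₁ * ξ x) ^ 3 := by
  set S := sSup (ξ '' Ω)
  have hξ_le : ∀ x ∈ Ω, ξ x ≤ S := fun x hx => le_csSup (hξ.bddAbove_image hΩbd) ⟨x, hx, rfl⟩
  obtain ⟨-, -, hξ_nonneg, hξ_lapl, -⟩ := hξ
  have hden : 0 < M₁ ^ q * S ^ q := by positivity
  refine ⟨div_pos (sub_pos.2 hsmall) hden, fun μ hμ hμlt => ?_⟩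
  have hψ_le : ∀ x ∈ Ω, M₁ * ξ x ≤ M₁ * S := fun x hx =>
    mul_le_mul_of_nonneg_left (hξ_le x hx) hM₁.le
  have hψ_nonneg : ∀ x ∈ Ω, 0 ≤ M₁ * ξ x := fun x hx => mul_nonneg hM₁.le (hξ_nonneg x hx)
  refine ⟨fun x hx => ⟨hψ_nonneg x hx, (hψ_le x hx).trans hhalf⟩, fun x hx => ⟨?_, ?_⟩⟩
  · rw [lapl_const_mul, ← mul_neg, hξ_lapl x hx, mul_one]
  · refine mul_rpow_add_pi_mul_sin_pow_three_lt (hψ_nonneg x hx) (hψ_le x hx)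
      ((hψ_le x hx).trans (hhalf.trans (by linarith [pi_pos]))) hq0.le hμ.le ?_
    rw [mul_rpow hM₁.le hξpos.le, mul_pow, ← mul_assoc π]
    rwa [lt_div_iff₀ hden] at hμlt

/-- The function `ψ = M₁ ξ` satisfies `0 ≤ ψ ≤ π/2` and is a strict supersolution of
`-Δu = μ u^q + π sin³(u)` for every `μ ∈ (0, μ₀)`, where
`μ₀ = (M₁ - π M₁³ (sup_Ω ξ)³)/(M₁^q (sup_Ω ξ)^q)`, provided `M₁ > π M₁³ (sup_Ω ξ)³`
and `M₁ · sup_Ω ξ ≤ π/2`. -/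
theorem stmt_12 {N : ℕ} (hN : 1 ≤ N) (Ω : Set (EuclideanSpace ℝ (Fin N)))
    (hΩo : IsOpen Ω) (hΩconn : IsConnected Ω) (hΩbd : Bornology.IsBounded Ω)
    (ξ : EuclideanSpace ℝ (Fin N) → ℝ) (hξ : IsTorsionFn Ω ξ)
    (hξpos : 0 < sSup (ξ '' Ω))
    (q : ℝ) (hq0 : 0 < q) (hq1 : q < 1)
    (M₁ : ℝ) (hM₁ : 0 < M₁)
    (hsmall : M₁ > π * M₁ ^ 3 * (sSup (ξ '' Ω)) ^ 3)
    (hhalf : M₁ * sSup (ξ '' Ω) ≤ π / 2) :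
    0 < (M₁ - π * M₁ ^ 3 * (sSup (ξ '' Ω)) ^ 3) / (M₁ ^ q * (sSup (ξ '' Ω)) ^ q) ∧
    ∀ μ : ℝ, 0 < μ →
      μ < (M₁ - π * M₁ ^ 3 * (sSup (ξ '' Ω)) ^ 3) / (M₁ ^ q * (sSup (ξ '' Ω)) ^ q) →
      (∀ x ∈ Ω, 0 ≤ M₁ * ξ x ∧ M₁ * ξ x ≤ π / 2) ∧
      ∀ x ∈ Ω, -lapl (fun y => M₁ * ξ y) x = M₁ ∧
        M₁ > μ * (M₁ * ξ x) ^ q + π * Real.sin (M₁ * ξ x) ^ 3 :=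
  stmt_12_general Ω hΩbd ξ hξ hξpos q hq0 M₁ hM₁ hsmall hhalf
end
end
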